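/- arXiv:1905.00725 — 10 statements merged into one kernel-verified Lean document; each statement's English description precedes it below -/
import Mathlib

section
/- For all n ≥ 0, 3·J₃(n) + j₃(n) = 2^(n+1), where J₃ and j₃ are the third-order Jacobsthal and third-order Jacobsthal-Lucas numbers. -/
def J3 : ℕ → ℤ
  | 0 => 0
  | 1 => 1
  | 2 => 1
  | n + 3 => J3 (n + 2) + J3 (n + 1) + 2 * J3 n

def j3 : ℕ → ℤ
  | 0 => 2
  | 1 => 1
  | 2 => 5
  | n + 3 => j3 (n + 2) + j3 (n + 1) + 2 * j3 n

theorem stmt0 : ∀ n : ℕ, 3 * J3 n + j3 n = 2 ^ (n + 1) := by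
  intro n
  induction n using Nat.strong_induction_on with
  | _ n ih =>
    match n with
    | 0 => decide
    | 1 => decide
    | 2 => decide
    | m + 3 =>
      have h0 := ih m (by omega)
      have h1 := ih (m + 1) (by omega)
      have h2 := ih (m + 2) (by omega)
      simp only [J3, j3]
      ring_nf
      ring_nf at h0 h1 h2
      nlinarith [h0, h1, h2, pow_pos (by norm_num : (0:ℤ) < 2) m]
end

section
/- For all n ≥ 3, j₃(n) − 3·J₃(n) = 2·j₃(n−3), where J₃ and j₃ are the third-order Jacobsthal and third-order Jacobsthal-Lucas numbers. -/
lemma key : ∀ n : ℕ, j3 (n + 3) - 3 * J3 (n + 3) = 2 * j3 n := by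
  intro n
  induction n using Nat.strong_induction_on with
  | _ n ih =>
    match n with
    | 0 => norm_num [J3, j3]
    | 1 => norm_num [J3, j3]
    | 2 => norm_num [J3, j3]
    | m + 3 =>
      have h0 := ih m (by omega)
      have h1 := ih (m + 1) (by omega)
      have h2 := ih (m + 2) (by omega)
      have eJ : J3 (m + 6) = J3 (m + 5) + J3 (m + 4) + 2 * J3 (m + 3) := by
        show J3 ((m + 3) + 3) = _; rw [J3]
      have ej : j3 (m + 6) = j3 (m + 5) + j3 (m + 4) + 2 * j3 (m + 3) := by
        show j3 ((m + 3) + 3) = _; rw [j3]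
      have ej3 : j3 (m + 3) = j3 (m + 2) + j3 (m + 1) + 2 * j3 m := by rw [j3]
      show j3 (m + 6) - 3 * J3 (m + 6) = 2 * j3 (m + 3)
      rw [show m + 2 + 3 = m + 5 from rfl] at h2
      linarith

theorem stmt1 : ∀ n : ℕ, 3 ≤ n → j3 n - 3 * J3 n = 2 * j3 (n - 3) := by
  intro n hn
  obtain ⟨m, rfl⟩ := Nat.exists_eq_add_of_le hn
  simpa [Nat.add_sub_cancel_left, add_comm] using key m
end

section
/- For all n ≥ 0, J₃(n+2) − 4·J₃(n) equals −2 if n ≡ 1 (mod 3), and equals 1 otherwise, where J₃ is the third-order Jacobsthal sequence. -/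
theorem stmt2 : ∀ n : ℕ, J3 (n + 2) - 4 * J3 n = if n % 3 = 1 then -2 else 1 := by
  intro n
  induction n using Nat.strong_induction_on with
  | _ n ih =>
    match n with
    | 0 => simp [J3]
    | 1 => simp [J3]
    | 2 => simp [J3]
    | n + 3 =>
      have h0 := ih n (by omega)
      have h1 := ih (n + 1) (by omega)
      have h2 := ih (n + 2) (by omega)
      have e1 : J3 (n + 5) = J3 (n + 4) + J3 (n + 3) + 2 * J3 (n + 2) := rfl
      have e2 : J3 (n + 4) = J3 (n + 3) + J3 (n + 2) + 2 * J3 (n + 1) := rfl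
      have e3 : J3 (n + 3) = J3 (n + 2) + J3 (n + 1) + 2 * J3 n := rfl
      have hm : (n + 3) % 3 = n % 3 := by omega
      show J3 (n + 5) - 4 * J3 (n + 3) = _
      rw [hm]
      split_ifs at h0 h1 h2 ⊢ with ha hb hc hd he hf hg <;> omega
end

section
/- For all n ≥ 0, j₃(n) − 4·J₃(n) equals 2 if n ≡ 0 (mod 3), equals −3 if n ≡ 1 (mod 3), and equals 1 if n ≡ 2 (mod 3). -/
theorem stmt3 : ∀ n : ℕ, j3 n - 4 * J3 n =
    if n % 3 = 0 then 2 else if n % 3 = 1 then -3 else 1 := by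
  intro n
  induction n using Nat.strong_induction_on with
  | _ n ih =>
    match n with
    | 0 => simp [j3, J3]
    | 1 => simp [j3, J3]
    | 2 => simp [j3, J3]
    | n + 3 =>
      have h0 := ih n (by omega)
      have h1 := ih (n + 1) (by omega)
      have h2 := ih (n + 2) (by omega)
      simp only [j3, J3]
      split_ifs at h0 h1 h2 ⊢ <;> omega
end

section
/- For all n ≥ 0, j₃(n+1) + j₃(n) = 3·J₃(n+2), where J₃ and j₃ are the third-order Jacobsthal and third-order Jacobsthal-Lucas numbers. -/
theorem stmt4 : ∀ n : ℕ, j3 (n + 1) + j3 n = 3 * J3 (n + 2) := by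
  intro n
  induction n using Nat.strong_induction_on with
  | _ n ih =>
    match n with
    | 0 => simp [J3, j3]
    | 1 => simp [J3, j3]
    | 2 => simp [J3, j3]
    | (m+3) =>
      have h0 := ih m (by omega)
      have h1 := ih (m+1) (by omega)
      have h2 := ih (m+2) (by omega)
      simp only [show m+3+1 = m+1+3 from rfl, show m+2+2 = m+1+3 from rfl, show m+3+2 = m+2+3 from rfl, J3, j3] at *
      linarith
end

section
/- For all n ≥ 0, j₃(n) − J₃(n+2) equals 1 if n ≡ 0 (mod 3), equals −1 if n ≡ 1 (mod 3), and equals 0 if n ≡ 2 (mod 3). -/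
theorem stmt5 : ∀ n : ℕ, j3 n - J3 (n + 2) =
    if n % 3 = 0 then 1 else if n % 3 = 1 then -1 else 0 := by
  have key : ∀ n : ℕ, (j3 n - J3 (n + 2) =
      (if n % 3 = 0 then 1 else if n % 3 = 1 then -1 else 0)) ∧
      (j3 (n+1) - J3 (n + 3) =
      (if (n+1) % 3 = 0 then 1 else if (n+1) % 3 = 1 then -1 else 0)) ∧
      (j3 (n+2) - J3 (n + 4) =
      (if (n+2) % 3 = 0 then 1 else if (n+2) % 3 = 1 then -1 else 0)) := by
    intro n
    induction n with
    | zero => norm_num [j3, J3]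
    | succ k ih =>
      obtain ⟨h0, h1, h2⟩ := ih
      refine ⟨h1, h2, ?_⟩
      have e1 : j3 (k+3) = j3 (k+2) + j3 (k+1) + 2 * j3 k := by rw [j3]
      have e2 : J3 (k+5) = J3 (k+4) + J3 (k+3) + 2 * J3 (k+2) := by
        show J3 (k+2+3) = _; rw [J3]
      have hm : (k+3) % 3 = k % 3 := by omega
      rw [show k+1+2 = k+3 by ring, show k+1+4 = k+5 by ring, hm, e1, e2]
      omega
  exact fun n => (key n).1
end

section
/- For all n ≥ 0, the sum ∑_{k=0}^{n} J₃(k) equals J₃(n+1) − 1 if n ≡ 0 (mod 3), and equals J₃(n+1) otherwise, where J₃ is the third-order Jacobsthal sequence. -/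
lemma J3_rec (n : ℕ) : J3 (n + 3) = J3 (n + 2) + J3 (n + 1) + 2 * J3 n := rfl

lemma aux1 : ∀ m : ℕ, J3 (3*m+1) = 2 * J3 (3*m) + 1 := by
  intro m
  induction m with
  | zero => simp [J3]
  | succ k ih =>
    have r1 : J3 (3*k+3) = J3 (3*k+2) + J3 (3*k+1) + 2 * J3 (3*k) := J3_rec (3*k)
    have r2 : J3 (3*k+4) = J3 (3*k+3) + J3 (3*k+2) + 2 * J3 (3*k+1) := J3_rec (3*k+1)
    show J3 (3*k+4) = 2 * J3 (3*k+3) + 1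
    linarith

lemma aux2 : ∀ m : ℕ, J3 (3*m+2) = 2 * J3 (3*m+1) - 1 := by
  intro m
  induction m with
  | zero => simp [J3]
  | succ k ih =>
    have r1 : J3 (3*k+3) = J3 (3*k+2) + J3 (3*k+1) + 2 * J3 (3*k) := J3_rec (3*k)
    have r2 : J3 (3*k+4) = J3 (3*k+3) + J3 (3*k+2) + 2 * J3 (3*k+1) := J3_rec (3*k+1)
    have r3 : J3 (3*k+5) = J3 (3*k+4) + J3 (3*k+3) + 2 * J3 (3*k+2) := J3_rec (3*k+2)
    show J3 (3*k+5) = 2 * J3 (3*k+4) - 1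
    linarith

theorem stmt7 : ∀ n : ℕ, ∑ k ∈ Finset.range (n + 1), J3 k =
    if n % 3 = 0 then J3 (n + 1) - 1 else J3 (n + 1) := by
  intro n
  induction n with
  | zero => simp [J3]
  | succ n ih =>
    rw [Finset.sum_range_succ, ih]
    obtain ⟨m, hm⟩ : ∃ m, n = 3*m ∨ n = 3*m+1 ∨ n = 3*m+2 := ⟨n/3, by omega⟩
    have r1 : J3 (3*m+3) = J3 (3*m+2) + J3 (3*m+1) + 2 * J3 (3*m) := J3_rec (3*m)
    have r2 : J3 (3*m+4) = J3 (3*m+3) + J3 (3*m+2) + 2 * J3 (3*m+1) := J3_rec (3*m+1)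
    have a1 := aux1 m
    have a2 := aux2 m
    rcases hm with h | h | h <;> subst h
    · rw [if_pos (by omega : 3*m % 3 = 0), if_neg (by omega : (3*m+1) % 3 ≠ 0)]
      show J3 (3*m+1) - 1 + J3 (3*m+1) = J3 (3*m+2)
      linarith
    · rw [if_neg (by omega : (3*m+1) % 3 ≠ 0), if_neg (by omega : (3*m+1+1) % 3 ≠ 0)]
      show J3 (3*m+2) + J3 (3*m+2) = J3 (3*m+3)
      linarith
    · rw [if_neg (by omega : (3*m+2) % 3 ≠ 0), if_pos (by omega : (3*m+2+1) % 3 = 0)]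
      show J3 (3*m+3) + J3 (3*m+3) = J3 (3*m+4) - 1
      linarith
end

section
/- For all n ≥ 3, (j₃(n))² − 9·(J₃(n))² = 2^(n+2)·j₃(n−3), where J₃ and j₃ are the third-order Jacobsthal and third-order Jacobsthal-Lucas numbers. -/
lemma sum_eq : ∀ n : ℕ, j3 n + 3 * J3 n = 2 ^ (n + 1) ∧
    j3 (n + 1) + 3 * J3 (n + 1) = 2 ^ (n + 2) ∧
    j3 (n + 2) + 3 * J3 (n + 2) = 2 ^ (n + 3) := by
  intro n
  induction n with
  | zero => norm_num [j3, J3]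
  | succ k ih =>
    obtain ⟨h1, h2, h3⟩ := ih
    refine ⟨h2, h3, ?_⟩
    show j3 (k + 3) + 3 * J3 (k + 3) = 2 ^ (k + 4)
    rw [j3, J3]
    linear_combination h3 + h2 + 2 * h1

lemma diff_eq : ∀ n : ℕ, j3 (n + 3) - 3 * J3 (n + 3) = 2 * j3 n ∧
    j3 (n + 4) - 3 * J3 (n + 4) = 2 * j3 (n + 1) ∧
    j3 (n + 5) - 3 * J3 (n + 5) = 2 * j3 (n + 2) := by
  intro n
  induction n with
  | zero =>
    refine ⟨?_, ?_, ?_⟩ <;> simp [j3, J3]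
  | succ k ih =>
    obtain ⟨h1, h2, h3⟩ := ih
    refine ⟨h2, h3, ?_⟩
    show j3 (k + 3 + 3) - 3 * J3 (k + 3 + 3) = 2 * j3 (k + 3)
    have h0 : j3 (k + 3) = j3 (k + 2) + j3 (k + 1) + 2 * j3 k := by rw [j3]
    rw [show k + 3 + 3 = (k + 3) + 3 from rfl, j3, J3]
    simp only [show k + 3 + 2 = k + 5 from rfl, show k + 3 + 1 = k + 4 from rfl]
    linear_combination h3 + h2 + 2 * h1 - 2 * h0

theorem stmt8 : ∀ n : ℕ, 3 ≤ n →
    (j3 n) ^ 2 - 9 * (J3 n) ^ 2 = 2 ^ (n + 2) * j3 (n - 3) := by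
  intro n hn
  obtain ⟨m, rfl⟩ := Nat.exists_eq_add_of_le hn
  rw [Nat.add_comm 3 m]
  have hm : m + 3 - 3 = m := by omega
  rw [hm]
  have h1 := (sum_eq (m + 3)).1
  have h2 := (diff_eq m).1
  linear_combination (j3 (m + 3) - 3 * J3 (m + 3)) * h1 + 2 ^ (m + 4) * h2
end

section
/- For all n ≥ 2, K₃(n) = J₃(n) + 2·J₃(n−1) + 6·J₃(n−2), where K₃ is the Modified third-order Jacobsthal sequence and J₃ is the third-order Jacobsthal sequence. -/
def K3 : ℕ → ℤ
  | 0 => 3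
  | 1 => 1
  | 2 => 3
  | n + 3 => K3 (n + 2) + K3 (n + 1) + 2 * K3 n

lemma aux : ∀ m : ℕ, K3 (m + 2) = J3 (m + 2) + 2 * J3 (m + 1) + 6 * J3 m := by
  intro m
  induction m using Nat.strong_induction_on with
  | _ m ih =>
    match m with
    | 0 => simp [J3, K3]
    | 1 => simp [J3, K3]
    | 2 => simp [J3, K3]
    | k + 3 =>
      have h0 := ih k (by omega)
      have h1 := ih (k + 1) (by omega)
      have h2 := ih (k + 2) (by omega)
      show K3 (k + 4) + K3 (k + 3) + 2 * K3 (k + 2) = _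
      rw [h0, h1, h2]
      show _ = (J3 (k + 4) + J3 (k + 3) + 2 * J3 (k + 2)) + 2 * J3 (k + 4) + 6 * J3 (k + 3)
      have j4 : J3 (k + 4) = J3 (k + 3) + J3 (k + 2) + 2 * J3 (k + 1) := rfl
      have j3 : J3 (k + 3) = J3 (k + 2) + J3 (k + 1) + 2 * J3 k := rfl
      rw [j4, j3]; ring

theorem stmt9 : ∀ n : ℕ, 2 ≤ n →
    K3 n = J3 n + 2 * J3 (n - 1) + 6 * J3 (n - 2) := by
  intro n hn
  obtain ⟨m, rfl⟩ : ∃ m, n = m + 2 := ⟨n - 2, by omega⟩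
  simpa using aux m
end

section
/- For all n ≥ 2, 147·J₃(n) = 13·K₃(n) + 48·K₃(n−1) + 20·K₃(n−2), where J₃ is the third-order Jacobsthal sequence and K₃ is the Modified third-order Jacobsthal sequence. -/
theorem aux13 : ∀ n : ℕ, 147 * J3 (n+2) = 13 * K3 (n+2) + 48 * K3 (n+1) + 20 * K3 n := by
  intro n
  induction n using Nat.strong_induction_on with
  | _ n ih =>
    match n with
    | 0 => norm_num [J3, K3]
    | 1 => norm_num [J3, K3]
    | 2 => norm_num [J3, K3]
    | k + 3 =>
      have h0 := ih k (by omega)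
      have h1 := ih (k+1) (by omega)
      have h2 := ih (k+2) (by omega)
      have eJ : J3 (k+5) = J3 (k+4) + J3 (k+3) + 2 * J3 (k+2) := rfl
      have eK5 : K3 (k+5) = K3 (k+4) + K3 (k+3) + 2 * K3 (k+2) := rfl
      have eK4 : K3 (k+4) = K3 (k+3) + K3 (k+2) + 2 * K3 (k+1) := rfl
      have eK3 : K3 (k+3) = K3 (k+2) + K3 (k+1) + 2 * K3 k := rfl
      show 147 * J3 (k+5) = 13 * K3 (k+5) + 48 * K3 (k+4) + 20 * K3 (k+3)
      simp only [show k+1+2=k+3 from rfl, show k+2+2=k+4 from rfl, show k+1+1=k+2 from rfl,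
        show k+2+1=k+3 from rfl] at h1 h2
      linarith

theorem stmt13 : ∀ n : ℕ, 2 ≤ n →
    147 * J3 n = 13 * K3 n + 48 * K3 (n - 1) + 20 * K3 (n - 2) := by
  intro n hn
  obtain ⟨k, rfl⟩ : ∃ k, n = k + 2 := ⟨n - 2, by omega⟩
  simpa using aux13 k
end
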